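/- arXiv:math/0305336 — 3 statements merged into one kernel-verified Lean document; each statement's English description precedes it below -/
import Mathlib

section
/- Let 𝒜 be a central hyperplane arrangement in ℝⁿ with base region B, let I ⊆ 𝒜, and let H ∈ I be a sink of the sub-digraph of the basic digraph 𝒟(𝒜,B) induced by I. Let 𝒜⁻ := 𝒜 − {H} and let B⁻ be the region of 𝒜⁻ containing B. Then the shards of (𝒜,B) contained in hyperplanes of I − {H} are exactly the shards of (𝒜⁻,B⁻) contained in hyperplanes of I − {H}. -/
open scoped RealInnerProductSpace

noncomputable section

variable {n : ℕ}

/-- A (linear) hyperplane in ℝⁿ: the zero set of a nonzero linear functional,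
expressed via the inner product with a nonzero normal vector. -/
def IsHyperplane (H : Set (EuclideanSpace ℝ (Fin n))) : Prop :=
  ∃ v : EuclideanSpace ℝ (Fin n), v ≠ 0 ∧ H = {x | ⟪v, x⟫ = 0}

/-- A central hyperplane arrangement: a finite nonempty collection of linear hyperplanes. -/
def IsCentralArrangement (A : Set (Set (EuclideanSpace ℝ (Fin n)))) : Prop :=
  A.Finite ∧ A.Nonempty ∧ ∀ H ∈ A, IsHyperplane H

/-- The complement of the union of the hyperplanes of the arrangement. -/
def arrComplement (A : Set (Set (EuclideanSpace ℝ (Fin n)))) : Set (EuclideanSpace ℝ (Fin n)) :=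
  (⋃ H ∈ A, H)ᶜ

/-- A region of the arrangement: the closure of a connected component of the complement
of the union of the hyperplanes. -/
def IsRegion (A : Set (Set (EuclideanSpace ℝ (Fin n)))) (R : Set (EuclideanSpace ℝ (Fin n))) :
    Prop :=
  ∃ x ∈ arrComplement A, R = closure (connectedComponentIn (arrComplement A) x)

/-- The hyperplane `H` separates the region `R` from the region `B`: their interiors lie on
strictly opposite sides of `H`. -/
def Separates (H R B : Set (EuclideanSpace ℝ (Fin n))) : Prop :=
  ∃ v : EuclideanSpace ℝ (Fin n), v ≠ 0 ∧ H = {x | ⟪v, x⟫ = 0} ∧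
    (∀ x ∈ interior R, 0 < ⟪v, x⟫) ∧ (∀ x ∈ interior B, ⟪v, x⟫ < 0)

/-- S(R): the set of hyperplanes of `A` separating `R` from the base region `B`. -/
def sepSet (A : Set (Set (EuclideanSpace ℝ (Fin n)))) (B R : Set (EuclideanSpace ℝ (Fin n))) :
    Set (Set (EuclideanSpace ℝ (Fin n))) :=
  {H | H ∈ A ∧ Separates H R B}

/-- The order of the poset of regions 𝒫(𝒜,B): containment of separating sets. -/
def regLE (A : Set (Set (EuclideanSpace ℝ (Fin n)))) (B R₁ R₂ : Set (EuclideanSpace ℝ (Fin n))) :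
    Prop :=
  sepSet A B R₁ ⊆ sepSet A B R₂

/-- Strict order on regions. -/
def regLT (A : Set (Set (EuclideanSpace ℝ (Fin n)))) (B R₁ R₂ : Set (EuclideanSpace ℝ (Fin n))) :
    Prop :=
  regLE A B R₁ R₂ ∧ ¬ regLE A B R₂ R₁

/-- The order dimension of the poset of regions 𝒫(𝒜,B): the smallest `d` such that it embeds
as an induced subposet of ℝᵈ with the componentwise order. -/
def regionOrderDim (A : Set (Set (EuclideanSpace ℝ (Fin n))))
    (B : Set (EuclideanSpace ℝ (Fin n))) : ℕ :=
  sInf {d : ℕ | ∃ f : {R : Set (EuclideanSpace ℝ (Fin n)) // IsRegion A R} → (Fin d → ℝ),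
    ∀ R₁ R₂, regLE A B R₁.1 R₂.1 ↔ ∀ i, f R₁ i ≤ f R₂ i}

/-- The rank-two subarrangement of `A` consisting of all hyperplanes of `A`
containing `H₁ ∩ H₂`. -/
def pencil (A : Set (Set (EuclideanSpace ℝ (Fin n)))) (H₁ H₂ : Set (EuclideanSpace ℝ (Fin n))) :
    Set (Set (EuclideanSpace ℝ (Fin n))) :=
  {H | H ∈ A ∧ H₁ ∩ H₂ ⊆ H}

/-- `H` is basic in the subarrangement `A'` relative to the base region `B`:
`H ∈ A'` and `H` bounds (meets in codimension one) the region `B'` of `A'` containing `B`. -/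
def IsBasicIn (A' : Set (Set (EuclideanSpace ℝ (Fin n)))) (B H : Set (EuclideanSpace ℝ (Fin n))) :
    Prop :=
  H ∈ A' ∧ ∃ B', IsRegion A' B' ∧ B ⊆ B' ∧
    Submodule.span ℝ (H ∩ B') = Submodule.span ℝ H

/-- The edge relation of the basic digraph 𝒟(𝒜,B): `H₁ → H₂` whenever `H₁` is basic in the
rank-two subarrangement consisting of all hyperplanes of `A` containing `H₁ ∩ H₂`. -/
def BasicEdge (A : Set (Set (EuclideanSpace ℝ (Fin n))))
    (B H₁ H₂ : Set (EuclideanSpace ℝ (Fin n))) : Prop :=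
  H₁ ∈ A ∧ H₂ ∈ A ∧ H₁ ≠ H₂ ∧ IsBasicIn (pencil A H₁ H₂) B H₁

/-- The hyperplane `H` with the cutting loci removed: for each rank-two subarrangement
containing `H` in which `H` is not basic, the codimension-two intersection is removed. -/
def shardCut (A : Set (Set (EuclideanSpace ℝ (Fin n)))) (B H : Set (EuclideanSpace ℝ (Fin n))) :
    Set (EuclideanSpace ℝ (Fin n)) :=
  H \ ⋃ H' ∈ {H' | H' ∈ A ∧ H' ≠ H ∧ ¬ IsBasicIn (pencil A H H') B H}, (H ∩ H')

/-- `Sg` is a shard of `(A,B)` contained in the hyperplane `H`: a connected component of `H`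
with the cutting loci removed. -/
def IsShardOf (A : Set (Set (EuclideanSpace ℝ (Fin n))))
    (B H Sg : Set (EuclideanSpace ℝ (Fin n))) : Prop :=
  H ∈ A ∧ ∃ x ∈ shardCut A B H, Sg = connectedComponentIn (shardCut A B H) x

/-- U(Σ): the regions meeting the shard `Sg` in codimension one whose separating set
contains the hyperplane `H` containing `Sg`. -/
def upperRegions (A : Set (Set (EuclideanSpace ℝ (Fin n))))
    (B H Sg : Set (EuclideanSpace ℝ (Fin n))) : Set (Set (EuclideanSpace ℝ (Fin n))) :=
  {R | IsRegion A R ∧ Submodule.span ℝ (R ∩ Sg) = Submodule.span ℝ H ∧ H ∈ sepSet A B R}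

/-- L(Σ): the regions meeting the shard `Sg` in codimension one whose separating set
does not contain the hyperplane `H` containing `Sg`. -/
def lowerRegions (A : Set (Set (EuclideanSpace ℝ (Fin n))))
    (B H Sg : Set (EuclideanSpace ℝ (Fin n))) : Set (Set (EuclideanSpace ℝ (Fin n))) :=
  {R | IsRegion A R ∧ Submodule.span ℝ (R ∩ Sg) = Submodule.span ℝ H ∧ H ∉ sepSet A B R}

/-- `J` is a minimal element of U(Σ), as a subposet of 𝒫(𝒜,B). -/
def MinimalInU (A : Set (Set (EuclideanSpace ℝ (Fin n))))
    (B H Sg J : Set (EuclideanSpace ℝ (Fin n))) : Prop :=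
  J ∈ upperRegions A B H Sg ∧
    ∀ R ∈ upperRegions A B H Sg, regLE A B R J → regLE A B J R

/-- `M` is a maximal element of L(Σ), as a subposet of 𝒫(𝒜,B). -/
def MaximalInL (A : Set (Set (EuclideanSpace ℝ (Fin n))))
    (B H Sg M : Set (EuclideanSpace ℝ (Fin n))) : Prop :=
  M ∈ lowerRegions A B H Sg ∧
    ∀ R ∈ lowerRegions A B H Sg, regLE A B M R → regLE A B R M

/-- `J` covers `Jst` in the poset of regions 𝒫(𝒜,B). -/
def CoversReg (A : Set (Set (EuclideanSpace ℝ (Fin n))))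
    (B J Jst : Set (EuclideanSpace ℝ (Fin n))) : Prop :=
  IsRegion A Jst ∧ regLT A B Jst J ∧
    ∀ R, IsRegion A R → regLT A B Jst R → regLT A B R J → False

/-- `R` is an upper bound of the set `X` of regions in 𝒫(𝒜,B). -/
def regIsUB (A : Set (Set (EuclideanSpace ℝ (Fin n)))) (B : Set (EuclideanSpace ℝ (Fin n)))
    (X : Set (Set (EuclideanSpace ℝ (Fin n)))) (R : Set (EuclideanSpace ℝ (Fin n))) : Prop :=
  ∀ R' ∈ X, regLE A B R' R

/-- `R` is the least upper bound of the set `X` of regions in 𝒫(𝒜,B). -/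
def regIsLUB (A : Set (Set (EuclideanSpace ℝ (Fin n)))) (B : Set (EuclideanSpace ℝ (Fin n)))
    (X : Set (Set (EuclideanSpace ℝ (Fin n)))) (R : Set (EuclideanSpace ℝ (Fin n))) : Prop :=
  regIsUB A B X R ∧ ∀ R', IsRegion A R' → regIsUB A B X R' → regLE A B R R'

/-- `R` is a lower bound of the set `X` of regions in 𝒫(𝒜,B). -/
def regIsLB (A : Set (Set (EuclideanSpace ℝ (Fin n)))) (B : Set (EuclideanSpace ℝ (Fin n)))
    (X : Set (Set (EuclideanSpace ℝ (Fin n)))) (R : Set (EuclideanSpace ℝ (Fin n))) : Prop :=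
  ∀ R' ∈ X, regLE A B R R'

/-- `R` is the greatest lower bound of the set `X` of regions in 𝒫(𝒜,B). -/
def regIsGLB (A : Set (Set (EuclideanSpace ℝ (Fin n)))) (B : Set (EuclideanSpace ℝ (Fin n)))
    (X : Set (Set (EuclideanSpace ℝ (Fin n)))) (R : Set (EuclideanSpace ℝ (Fin n))) : Prop :=
  regIsLB A B X R ∧ ∀ R', IsRegion A R' → regIsLB A B X R' → regLE A B R' R

/-- `J` is join-irreducible in 𝒫(𝒜,B): there is no set `X` of regions with `J ∉ X`
whose least upper bound is `J`. -/
def JoinIrredReg (A : Set (Set (EuclideanSpace ℝ (Fin n))))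
    (B J : Set (EuclideanSpace ℝ (Fin n))) : Prop :=
  IsRegion A J ∧ ¬ ∃ X : Set (Set (EuclideanSpace ℝ (Fin n))),
    (∀ R ∈ X, IsRegion A R) ∧ J ∉ X ∧ regIsLUB A B X J

/-- `M` is meet-irreducible in 𝒫(𝒜,B): there is no set `X` of regions with `M ∉ X`
whose greatest lower bound is `M`. -/
def MeetIrredReg (A : Set (Set (EuclideanSpace ℝ (Fin n))))
    (B M : Set (EuclideanSpace ℝ (Fin n))) : Prop :=
  IsRegion A M ∧ ¬ ∃ X : Set (Set (EuclideanSpace ℝ (Fin n))),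
    (∀ R ∈ X, IsRegion A R) ∧ M ∉ X ∧ regIsGLB A B X M

/-- `(J,M)` is a subcritical pair in the poset of regions 𝒫(𝒜,B). -/
def SubcritReg (A : Set (Set (EuclideanSpace ℝ (Fin n))))
    (B J M : Set (EuclideanSpace ℝ (Fin n))) : Prop :=
  IsRegion A J ∧ IsRegion A M ∧ ¬ regLE A B J M ∧
    (∀ X, IsRegion A X → regLT A B X J → regLE A B X M) ∧
    (∀ X, IsRegion A X → regLT A B M X → regLE A B J X)

/-!
For `H' ∈ I \ {H}` it suffices that `H'` is cut along the same codimension-two flats in `(A, B)`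
and in `(A⁻, B⁻)`. In every rank-two pencil through `H'` that contains `H`, the sink condition says
that `H` does not bound the region containing `B`. Deleting such a hyperplane does not change that
region: its component in the smaller complement cannot reach `H`, since a point of `H` in its
closure off the other hyperplanes would make `H` a facet. So `H'` is basic in such a pencil before
deleting `H` if and only if it is basic after. The flat `H ∩ H'` itself is not lost, because the
pencil of `H` and `H'` has a third hyperplane: in a pencil of only two hyperplanes both are basic.
-/

local notation "ℝⁿ" => EuclideanSpace ℝ (Fin n)

lemma IsCoatom.inf_eq_of_inf_le {α : Type*} [Lattice α] [BoundedOrder α]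
    [IsLowerModularLattice α] {a b c : α} (ha : IsCoatom a) (hb : IsCoatom b) (hc : c ≠ ⊤)
    (hab : a ≠ b) (hca : c ≠ a) (h : a ⊓ b ≤ c) : a ⊓ c = a ⊓ b := by
  have hcov : a ⊓ b ⋖ a := by
    rw [inf_comm]
    exact inf_covBy_of_covBy_sup_left (by rw [hb.sup_eq_top_of_ne ha hab.symm]; exact hb.covBy_top)
  refine ((hcov.eq_or_eq (le_inf inf_le_left h) inf_le_left).resolve_right fun hac => ?_)
  exact hca ((ha.le_iff_eq hc).mp (inf_eq_left.mp hac))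

lemma setOf_inner_eq_zero_eq_ker {v : ℝⁿ} :
    {x : ℝⁿ | ⟪v, x⟫ = 0} = (LinearMap.ker (innerₛₗ ℝ v) : Set ℝⁿ) := rfl

lemma IsHyperplane.exists_isCoatom {H : Set ℝⁿ} (hH : IsHyperplane H) :
    ∃ U : Submodule ℝ ℝⁿ, IsCoatom U ∧ H = U := by
  obtain ⟨v, hv, rfl⟩ := hH
  refine ⟨_, LinearMap.isCoatom_ker_of_surjective (LinearMap.surjective_iff_ne_zero.mpr ?_),
    setOf_inner_eq_zero_eq_ker⟩
  intro h
  exact hv (by simpa using LinearMap.congr_fun h v)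

lemma IsHyperplane.isClosed {H : Set ℝⁿ} (hH : IsHyperplane H) : IsClosed H := by
  obtain ⟨v, -, rfl⟩ := hH
  exact isClosed_eq (continuous_const.inner continuous_id) continuous_const

lemma IsHyperplane.eq_of_subset {H H' : Set ℝⁿ} (hH : IsHyperplane H) (hH' : IsHyperplane H')
    (h : H ⊆ H') : H = H' := by
  obtain ⟨U, hU, rfl⟩ := hH.exists_isCoatom
  obtain ⟨U', hU', rfl⟩ := hH'.exists_isCoatom
  rw [(hU.le_iff_eq hU'.ne_top).mp (SetLike.coe_subset_coe.mp h)]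

lemma IsHyperplane.inter_eq_of_inter_subset {H₁ H₂ K : Set ℝⁿ} (hH₁ : IsHyperplane H₁)
    (hH₂ : IsHyperplane H₂) (hK : IsHyperplane K) (h₁₂ : H₁ ≠ H₂) (hK₁ : K ≠ H₁)
    (h : H₁ ∩ H₂ ⊆ K) : H₁ ∩ K = H₁ ∩ H₂ := by
  obtain ⟨U₁, hU₁, rfl⟩ := hH₁.exists_isCoatom
  obtain ⟨U₂, hU₂, rfl⟩ := hH₂.exists_isCoatom
  obtain ⟨V, hV, rfl⟩ := hK.exists_isCoatom
  simp only [← Submodule.coe_inf, SetLike.coe_set_eq, ne_eq] at h₁₂ hK₁ ⊢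
  exact hU₁.inf_eq_of_inf_le hU₂ hV.ne_top h₁₂ hK₁ (SetLike.coe_subset_coe.mp h)

lemma mem_arrComplement {A : Set (Set ℝⁿ)} {x : ℝⁿ} :
    x ∈ arrComplement A ↔ ∀ K ∈ A, x ∉ K := by
  simp [arrComplement]

lemma arrComplement_anti {A A' : Set (Set ℝⁿ)} (h : A' ⊆ A) :
    arrComplement A ⊆ arrComplement A' := fun _ hx =>
  mem_arrComplement.mpr fun K hK => mem_arrComplement.mp hx K (h hK)

lemma mem_arrComplement_of_sdiff {A : Set (Set ℝⁿ)} {H : Set ℝⁿ} {x : ℝⁿ}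
    (hx : x ∈ arrComplement (A \ {H})) (hxH : x ∉ H) : x ∈ arrComplement A :=
  mem_arrComplement.mpr fun K hK => by
    rcases eq_or_ne K H with rfl | hKH
    · exact hxH
    · exact mem_arrComplement.mp hx K ⟨hK, hKH⟩

lemma isOpen_arrComplement {A : Set (Set ℝⁿ)} (hfin : A.Finite) (hcl : ∀ K ∈ A, IsClosed K) :
    IsOpen (arrComplement A) :=
  (hfin.isClosed_biUnion hcl).isOpen_compl

lemma mem_connectedComponentIn_of_mem_closure {α : Type*} [TopologicalSpace α]
    [LocallyConnectedSpace α] {W : Set α} (hW : IsOpen W) {x y : α}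
    (hy : y ∈ closure (connectedComponentIn W x)) (hyW : y ∈ W) :
    y ∈ connectedComponentIn W x := by
  obtain ⟨z, hzy, hzx⟩ := mem_closure_iff_nhds.mp hy _
    (hW.connectedComponentIn.mem_nhds (mem_connectedComponentIn hyW))
  rw [connectedComponentIn_eq hzx, ← connectedComponentIn_eq hzy]
  exact mem_connectedComponentIn hyW

def regionAt (A : Set (Set ℝⁿ)) (x : ℝⁿ) : Set ℝⁿ :=
  closure (connectedComponentIn (arrComplement A) x)

lemma regionAt_anti {A A' : Set (Set ℝⁿ)} (h : A' ⊆ A) (x : ℝⁿ) :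
    regionAt A x ⊆ regionAt A' x :=
  closure_mono (connectedComponentIn_mono x (arrComplement_anti h))

lemma IsRegion.exists_mem_arrComplement {A : Set (Set ℝⁿ)} {R : Set ℝⁿ} (hR : IsRegion A R) :
    ∃ x ∈ R, x ∈ arrComplement A := by
  obtain ⟨x, hx, rfl⟩ := hR
  exact ⟨x, subset_closure (mem_connectedComponentIn hx), hx⟩

lemma IsRegion.eq_regionAt {A : Set (Set ℝⁿ)} {R : Set ℝⁿ} (hfin : A.Finite)
    (hcl : ∀ K ∈ A, IsClosed K) (hR : IsRegion A R) {x : ℝⁿ} (hxR : x ∈ R)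
    (hx : x ∈ arrComplement A) : R = regionAt A x := by
  obtain ⟨z, -, rfl⟩ := hR
  rw [regionAt, connectedComponentIn_eq
    (mem_connectedComponentIn_of_mem_closure (isOpen_arrComplement hfin hcl) hxR hx)]

lemma isBasicIn_iff_span_regionAt {A P : Set (Set ℝⁿ)} {B K : Set ℝⁿ} {x : ℝⁿ}
    (hfin : A.Finite) (hcl : ∀ K ∈ A, IsClosed K) (hB : IsRegion A B) (hxB : x ∈ B)
    (hx : x ∈ arrComplement A) (hPA : P ⊆ A) :
    IsBasicIn P B K ↔ K ∈ P ∧ Submodule.span ℝ (K ∩ regionAt P x) = Submodule.span ℝ K := by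
  have hxP := arrComplement_anti hPA hx
  constructor
  · rintro ⟨hK, B', hB', hBB', hspan⟩
    rw [hB'.eq_regionAt (hfin.subset hPA) (fun K hK => hcl K (hPA hK)) (hBB' hxB) hxP] at hspan
    exact ⟨hK, hspan⟩
  · rintro ⟨hK, hspan⟩
    refine ⟨hK, regionAt P x, ⟨x, hxP, rfl⟩, ?_, hspan⟩
    rw [hB.eq_regionAt hfin hcl hxB hx]
    exact regionAt_anti hPA x

lemma Submodule.span_inter_eq_of_inter_ball_subset {E : Type*} [NormedAddCommGroup E]
    [NormedSpace ℝ E] (U : Submodule ℝ E) {S : Set E} {y : E} {ε : ℝ} (hy : y ∈ U) (hε : 0 < ε)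
    (h : (U : Set E) ∩ Metric.ball y ε ⊆ S) : Submodule.span ℝ ((U : Set E) ∩ S) = U := by
  refine le_antisymm (Submodule.span_le.mpr Set.inter_subset_left) fun u hu => ?_
  set δ := ε / (‖u‖ + 1)
  have hδ : 0 < δ := by positivity
  have hδu : δ * ‖u‖ < ε := by
    calc δ * ‖u‖ < δ * (‖u‖ + 1) := by gcongr; linarith
      _ = ε := div_mul_cancel₀ _ (by positivity)
  have hmem : ∀ t : ℝ, |t| * ‖u‖ < ε → y + t • u ∈ Submodule.span ℝ ((U : Set E) ∩ S) :=
    fun t ht => have hU := U.add_mem hy (U.smul_mem t hu)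
      Submodule.subset_span ⟨hU, h ⟨hU, by simpa [dist_eq_norm, norm_smul] using ht⟩⟩
  have hsub := Submodule.sub_mem _ (hmem δ (by rwa [abs_of_pos hδ])) (hmem 0 (by simpa using hε))
  simpa [smul_smul, hδ.ne'] using Submodule.smul_mem _ δ⁻¹ hsub

lemma span_inter_regionAt_eq {P : Set (Set ℝⁿ)} {H : Set ℝⁿ} {x y : ℝⁿ} (hfin : P.Finite)
    (hhyp : ∀ K ∈ P, IsHyperplane K) (hHP : H ∈ P) (hy : y ∈ regionAt P x) (hyH : y ∈ H)
    (hyP : y ∈ arrComplement (P \ {H})) :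
    Submodule.span ℝ (H ∩ regionAt P x) = Submodule.span ℝ H := by
  obtain ⟨v, -, rfl⟩ := hhyp H hHP
  obtain ⟨ε, hε, hball⟩ := Metric.isOpen_iff.mp (isOpen_arrComplement
    (hfin.subset Set.sdiff_subset) fun K hK => (hhyp K hK.1).isClosed) y hyP
  obtain ⟨z, hzy, hzC⟩ := mem_closure_iff_nhds.mp hy _ (Metric.ball_mem_nhds y hε)
  have hzP : z ∈ arrComplement P := connectedComponentIn_subset _ _ hzC
  have hs : ⟪v, z⟫ ≠ 0 := mem_arrComplement.mp hzP _ hHP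
  -- the half of the ball on the side of `z` lies in the component, and its closure contains
  -- the whole disc cut out of `H` by the ball
  set U := Metric.ball y ε ∩ {p | 0 < ⟪⟪v, z⟫ • v, p⟫}
  have hUP : U ⊆ arrComplement P := fun p ⟨hpb, hps⟩ => by
    refine mem_arrComplement_of_sdiff (hball hpb) fun hpH => ?_
    simp_all [real_inner_smul_left]
  have hUC : U ⊆ connectedComponentIn (arrComplement P) x := by
    rw [connectedComponentIn_eq hzC]
    refine ((convex_ball y ε).inter (convex_halfSpace_gt (innerₛₗ ℝ (⟪v, z⟫ • v)).isLinear 0))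
      |>.isPreconnected.subset_connectedComponentIn ⟨hzy, ?_⟩ hUP
    simpa [real_inner_smul_left] using mul_self_pos.mpr hs
  have hdisc : {p | ⟪v, p⟫ = 0} ∩ Metric.ball y ε ⊆ regionAt P x := by
    rintro w ⟨hw : ⟪v, w⟫ = 0, hwb⟩
    refine closure_mono (hUC.trans' ?_)
      (segment_subset_closure_openSegment (left_mem_segment ℝ w z))
    rintro p ⟨a, b, ha, hb, hab, rfl⟩
    refine ⟨(convex_ball y ε).openSegment_subset hwb hzy ⟨a, b, ha, hb, hab, rfl⟩, ?_⟩
    have hp : ⟪⟪v, z⟫ • v, a • w + b • z⟫ = b * (⟪v, z⟫ * ⟪v, z⟫) := by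
      simp only [inner_add_right, real_inner_smul_left, real_inner_smul_right, hw]
      ring
    rw [Set.mem_ofPred_eq, hp]
    exact mul_pos hb (mul_self_pos.mpr hs)
  rw [setOf_inner_eq_zero_eq_ker, Submodule.span_eq]
  exact Submodule.span_inter_eq_of_inter_ball_subset _ hyH hε hdisc

lemma connectedComponentIn_arrComplement_sdiff_eq {P : Set (Set ℝⁿ)} {H : Set ℝⁿ} {x : ℝⁿ}
    (hfin : P.Finite) (hhyp : ∀ K ∈ P, IsHyperplane K) (hHP : H ∈ P)
    (hx : x ∈ arrComplement P)
    (hnb : Submodule.span ℝ (H ∩ regionAt P x) ≠ Submodule.span ℝ H) :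
    connectedComponentIn (arrComplement (P \ {H})) x =
      connectedComponentIn (arrComplement P) x := by
  have hopen := isOpen_arrComplement hfin fun K hK => (hhyp K hK).isClosed
  have hx' : x ∈ arrComplement (P \ {H}) := arrComplement_anti Set.sdiff_subset hx
  refine Set.Subset.antisymm ?_ (connectedComponentIn_mono x (arrComplement_anti Set.sdiff_subset))
  refine isPreconnected_connectedComponentIn.subset_of_closure_inter_subset
    hopen.connectedComponentIn ⟨x, mem_connectedComponentIn hx', mem_connectedComponentIn hx⟩ ?_
  rintro p ⟨hpC, hpC'⟩
  have hpW := connectedComponentIn_subset _ _ hpC'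
  -- a point of `H` in the closure of the component would make `H` a facet of the region
  have hpH : p ∉ H := fun hpH => hnb (span_inter_regionAt_eq hfin hhyp hHP hpC hpH hpW)
  exact mem_connectedComponentIn_of_mem_closure hopen hpC (mem_arrComplement_of_sdiff hpW hpH)

lemma span_inter_regionAt_pair {H H' : Set ℝⁿ} {x : ℝⁿ} (hH : IsHyperplane H)
    (hH' : IsHyperplane H') (hne : H ≠ H') (hx : x ∈ arrComplement {H, H'}) :
    Submodule.span ℝ (H ∩ regionAt {H, H'} x) = Submodule.span ℝ H := by
  by_contra hnb
  have hcc := connectedComponentIn_arrComplement_sdiff_eq (Set.toFinite _)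
    (by rintro K (rfl | rfl) <;> assumption) (Set.mem_insert _ _) hx hnb
  rw [Set.insert_sdiff_self_of_notMem (by simpa using hne)] at hcc
  obtain ⟨v, hv, rfl⟩ := hH'
  obtain ⟨h, hhH, hvh⟩ : ∃ h ∈ H, ⟪v, h⟫ ≠ 0 := by
    by_contra! hsub
    exact hne (hH.eq_of_subset ⟨v, hv, rfl⟩ hsub)
  have hvx : ⟪v, x⟫ ≠ 0 := mem_arrComplement.mp hx _ (Set.mem_insert_of_mem _ rfl)
  -- the side of `H'` containing `x` is convex, so it lies in the component of `x`; but it meets `H`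
  set S := {p : ℝⁿ | 0 < ⟪⟪v, x⟫ • v, p⟫}
  have hSC : S ⊆ connectedComponentIn (arrComplement {{p | ⟪v, p⟫ = 0}}) x := by
    refine (convex_halfSpace_gt (innerₛₗ ℝ (⟪v, x⟫ • v)).isLinear 0).isPreconnected
      |>.subset_connectedComponentIn ?_ fun p hp => mem_arrComplement.mpr ?_
    · simpa [S, real_inner_smul_left] using mul_self_pos.mpr hvx
    · rintro K rfl (hpK : ⟪v, p⟫ = 0)
      simp_all
  have hmem : (⟪v, x⟫ / ⟪v, h⟫) • h ∈ S := by
    simpa [S, real_inner_smul_left, real_inner_smul_right, hvh] using mul_self_pos.mpr hvx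
  rw [hcc] at hSC
  exact mem_arrComplement.mp (connectedComponentIn_subset _ _ (hSC hmem)) H (Set.mem_insert _ _)
    (by obtain ⟨U, -, rfl⟩ := hH.exists_isCoatom; exact U.smul_mem _ hhH)

lemma pencil_comm (A : Set (Set ℝⁿ)) (H₁ H₂ : Set ℝⁿ) : pencil A H₁ H₂ = pencil A H₂ H₁ := by
  simp only [pencil, Set.inter_comm]

lemma pencil_sdiff (A : Set (Set ℝⁿ)) (H H₁ H₂ : Set ℝⁿ) :
    pencil (A \ {H}) H₁ H₂ = pencil A H₁ H₂ \ {H} := by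
  ext K
  simp only [pencil, Set.mem_ofPred_eq, Set.mem_sdiff]
  tauto

lemma pencil_eq_of_mem {A : Set (Set ℝⁿ)} {H₁ H₂ K : Set ℝⁿ} (hH₁ : IsHyperplane H₁)
    (hH₂ : IsHyperplane H₂) (hK : IsHyperplane K) (h₁₂ : H₁ ≠ H₂) (hKP : K ∈ pencil A H₁ H₂)
    (hK₁ : K ≠ H₁) : pencil A H₁ K = pencil A H₁ H₂ := by
  simp only [pencil, hH₁.inter_eq_of_inter_subset hH₂ hK h₁₂ hK₁ hKP.2]

lemma not_isBasicIn_pencil_of_not_basicEdge {A : Set (Set ℝⁿ)} {B H H' K : Set ℝⁿ}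
    (hhyp : ∀ K ∈ A, IsHyperplane K) (hH : H ∈ A) (hH' : H' ∈ A) (hK : K ∈ A) (hHH' : H ≠ H')
    (hKH' : K ≠ H') (hsink : ¬ BasicEdge A B H H') (hHP : H ∈ pencil A H' K) :
    ¬ IsBasicIn (pencil A H' K) B H := fun hb =>
  hsink ⟨hH, hH', hHH', by
    rwa [pencil_comm, pencil_eq_of_mem (hhyp H' hH') (hhyp K hK) (hhyp H hH) hKH'.symm hHP hHH']⟩

lemma isBasicIn_sdiff_iff {A P : Set (Set ℝⁿ)} {B Bm H K : Set ℝⁿ} (hfin : A.Finite)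
    (hhyp : ∀ K ∈ A, IsHyperplane K) (hB : IsRegion A B) (hBm : IsRegion (A \ {H}) Bm)
    (hBBm : B ⊆ Bm) (hPA : P ⊆ A) (hHP : H ∈ P → ¬ IsBasicIn P B H) (hKH : K ≠ H) :
    IsBasicIn (P \ {H}) Bm K ↔ IsBasicIn P B K := by
  have hcl : ∀ K ∈ A, IsClosed K := fun K hK => (hhyp K hK).isClosed
  obtain ⟨x, hxB, hx⟩ := hB.exists_mem_arrComplement
  have hregion : regionAt (P \ {H}) x = regionAt P x := by
    by_cases hH : H ∈ P
    · have hnb := hHP hH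
      rw [isBasicIn_iff_span_regionAt hfin hcl hB hxB hx hPA] at hnb
      rw [regionAt, connectedComponentIn_arrComplement_sdiff_eq (hfin.subset hPA)
        (fun K hK => hhyp K (hPA hK)) hH (arrComplement_anti hPA hx) fun h => hnb ⟨hH, h⟩]
      rfl
    · rw [Set.sdiff_singleton_eq_self hH]
  rw [isBasicIn_iff_span_regionAt (hfin.subset Set.sdiff_subset) (fun K hK => hcl K hK.1) hBm
      (hBBm hxB) (arrComplement_anti Set.sdiff_subset hx) (Set.sdiff_subset_sdiff_left hPA),
    isBasicIn_iff_span_regionAt hfin hcl hB hxB hx hPA, hregion, Set.mem_sdiff,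
    Set.mem_singleton_iff, and_iff_left hKH]

lemma exists_mem_pencil_ne_of_not_isBasicIn {A : Set (Set ℝⁿ)} {B H H' : Set ℝⁿ}
    (hfin : A.Finite) (hhyp : ∀ K ∈ A, IsHyperplane K) (hB : IsRegion A B) (hH : H ∈ A)
    (hH' : H' ∈ A) (hne : H ≠ H') (hnb : ¬ IsBasicIn (pencil A H H') B H) :
    ∃ K ∈ pencil A H H', K ≠ H ∧ K ≠ H' := by
  by_contra! hpair
  have hPA : pencil A H H' ⊆ A := fun K hK => hK.1
  have hP : pencil A H H' = {H, H'} := by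
    refine Set.Subset.antisymm (fun K hK => ?_) ?_
    · by_cases hKH : K = H
      · exact Or.inl hKH
      · exact Or.inr (hpair K hK hKH)
    · rintro K (rfl | rfl)
      exacts [⟨hH, Set.inter_subset_left⟩, ⟨hH', Set.inter_subset_right⟩]
  obtain ⟨x, hxB, hx⟩ := hB.exists_mem_arrComplement
  refine hnb ((isBasicIn_iff_span_regionAt hfin (fun K hK => (hhyp K hK).isClosed) hB hxB hx
    hPA).mpr ⟨hP ▸ Set.mem_insert _ _, ?_⟩)
  rw [hP]
  exact span_inter_regionAt_pair (hhyp H hH) (hhyp H' hH') hne (arrComplement_anti (hP ▸ hPA) hx)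

lemma shardCut_subset_shardCut {A₁ A₂ : Set (Set ℝⁿ)} {B₁ B₂ H : Set ℝⁿ}
    (h : ∀ K ∈ A₂, K ≠ H → ¬ IsBasicIn (pencil A₂ H K) B₂ H →
      ∃ K' ∈ A₁, K' ≠ H ∧ ¬ IsBasicIn (pencil A₁ H K') B₁ H ∧ H ∩ K ⊆ K') :
    shardCut A₁ B₁ H ⊆ shardCut A₂ B₂ H := by
  refine Set.sdiff_subset_sdiff_right (Set.iUnion₂_subset fun K ⟨hK, hKH, hnb⟩ => ?_)
  obtain ⟨K', hK', hK'H, hnb', hsub⟩ := h K hK hKH hnb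
  exact fun p hp => Set.mem_biUnion (x := K') ⟨hK', hK'H, hnb'⟩ ⟨hp.1, hsub hp⟩

lemma shardCut_sdiff_eq {A : Set (Set ℝⁿ)} {B Bm H H' : Set ℝⁿ} (hfin : A.Finite)
    (hhyp : ∀ K ∈ A, IsHyperplane K) (hB : IsRegion A B) (hBm : IsRegion (A \ {H}) Bm)
    (hBBm : B ⊆ Bm) (hH : H ∈ A) (hH' : H' ∈ A) (hne : H ≠ H')
    (hsink : ¬ BasicEdge A B H H') :
    shardCut (A \ {H}) Bm H' = shardCut A B H' := by
  have htransfer : ∀ K ∈ A, K ≠ H' →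
      (IsBasicIn (pencil (A \ {H}) H' K) Bm H' ↔ IsBasicIn (pencil A H' K) B H') :=
    fun K hK hKH' => pencil_sdiff A H H' K ▸ isBasicIn_sdiff_iff hfin hhyp hB hBm hBBm
      (fun _ hL => hL.1) (not_isBasicIn_pencil_of_not_basicEdge hhyp hH hH' hK hne hKH' hsink)
      hne.symm
  refine Set.Subset.antisymm (shardCut_subset_shardCut fun K hK hKH' hnb => ?_)
    (shardCut_subset_shardCut fun K hK hKH' hnb =>
      ⟨K, hK.1, hKH', mt (htransfer K hK.1 hKH').mpr hnb, Set.inter_subset_right⟩)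
  rcases eq_or_ne K H with rfl | hKH
  · -- the pencil of `H` and `H'` has a third member `K'`, which cuts `H'` along the same flat
    obtain ⟨K', hK'P, hK'K, hK'H'⟩ :=
      exists_mem_pencil_ne_of_not_isBasicIn hfin hhyp hB hK hH' hne
        fun hb => hsink ⟨hK, hH', hne, hb⟩
    rw [pencil_comm] at hK'P
    have hpencil := pencil_eq_of_mem (hhyp H' hH') (hhyp K hK) (hhyp K' hK'P.1) hne.symm hK'P hK'H'
    refine ⟨K', ⟨hK'P.1, hK'K⟩, hK'H', ?_, Set.inter_comm K H' ▸ hK'P.2⟩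
    rwa [htransfer K' hK'P.1 hK'H', hpencil]
  · exact ⟨K, ⟨hK, hKH⟩, hKH', mt (htransfer K hK hKH').mp hnb, Set.inter_subset_right⟩

/-- **Lemma (Reading, Lemma 6).** Let `I ⊆ A` and let `H ∈ I` be a sink of the sub-digraph of
the basic digraph 𝒟(𝒜,B) induced by `I`.  Let `A⁻ = A − {H}` and let `B⁻` be the region of
`A⁻` containing `B`.  Then the shards of `(A,B)` contained in hyperplanes of `I − {H}` are
exactly the shards of `(A⁻,B⁻)` contained in hyperplanes of `I − {H}`. -/
theorem shards_inherit {n : ℕ}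
    (A : Set (Set (EuclideanSpace ℝ (Fin n)))) (B : Set (EuclideanSpace ℝ (Fin n)))
    (hA : IsCentralArrangement A) (hB : IsRegion A B)
    (I : Set (Set (EuclideanSpace ℝ (Fin n)))) (hI : I ⊆ A)
    (H : Set (EuclideanSpace ℝ (Fin n))) (hH : H ∈ I)
    (hsink : ∀ H' ∈ I, ¬ BasicEdge A B H H')
    (Bm : Set (EuclideanSpace ℝ (Fin n)))
    (hBm : IsRegion (A \ {H}) Bm) (hBBm : B ⊆ Bm) :
    ∀ H' ∈ I \ {H}, ∀ Sg,
      (IsShardOf A B H' Sg ↔ IsShardOf (A \ {H}) Bm H' Sg) := by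
  obtain ⟨hfin, -, hhyp⟩ := hA
  rintro H' ⟨hH'I, hH'H⟩ Sg
  have hne : H ≠ H' := fun h => hH'H h.symm
  rw [IsShardOf, IsShardOf,
    shardCut_sdiff_eq hfin hhyp hB hBm hBBm (hI hH) (hI hH'I) hne (hsink H' hH'I)]
  exact and_congr_left fun _ => ⟨fun h => ⟨h, hH'H⟩, fun h => h.1⟩
end
end

section
/- The order dimension of a finite poset P is equal to the smallest d such that there exist posets Q₁,…,Q_d and order-preserving maps η_i : P → Q_i for i = 1,…,d with the property that for every subcritical pair (j,m) of P there is some i with η_i(m) < η_i(j). -/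
/-- `(j, m)` is a subcritical pair in the poset `P`: `j ≰ m`, everything strictly below `j`
is below `m`, and everything strictly above `m` is above `j`. -/
def Subcritical {P : Type*} [PartialOrder P] (j m : P) : Prop :=
  ¬ j ≤ m ∧ (∀ x, x < j → x ≤ m) ∧ (∀ x, m < x → j ≤ x)

/-- The order dimension of a poset `P`: the smallest `d` such that `P` embeds as an induced
subposet of ℝᵈ with the componentwise order. -/
noncomputable def orderDim (P : Type*) [PartialOrder P] : ℕ :=
  sInf {d : ℕ | ∃ f : P → (Fin d → ℝ), ∀ x y : P, x ≤ y ↔ ∀ i, f x i ≤ f y i}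

/-!
A family of monotone maps `gᵢ : P → Qᵢ` reversing every subcritical pair already reflects the
order: if `x ≰ y`, a minimal `j ≤ x` with `j ≰ y` and then a maximal `m ≥ y` with `j ≰ m` form a
subcritical pair, and `gᵢ y ≤ gᵢ m < gᵢ j ≤ gᵢ x` for the index reversing it. An embedding into
`ℝᵈ` gives such a family (its coordinates), and conversely each `ηᵢ` into an arbitrary poset can
be replaced by the real-valued map `x ↦ #{z | ηᵢ z < ηᵢ x}`, which is monotone and still reverses
every pair that `ηᵢ` reverses.
-/

open Finset

theorem exists_subcritical_of_not_le {P : Type*} [PartialOrder P] [WellFoundedLT P]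
    [WellFoundedGT P] {x y : P} (h : ¬ x ≤ y) : ∃ j m, Subcritical j m ∧ j ≤ x ∧ y ≤ m := by
  obtain ⟨j, hjx, hj⟩ := exists_minimal_le_of_wellFoundedLT (fun j => ¬ j ≤ y) x h
  obtain ⟨m, hym, hm⟩ := exists_maximal_ge_of_wellFoundedGT (fun m => ¬ j ≤ m) y hj.prop
  refine ⟨j, m, ⟨hm.prop, fun z hzj => ?_, fun z hmz => ?_⟩, hjx, hym⟩
  · by_contra hzm
    exact hj.not_lt (fun hzy => hzm (hzy.trans hym)) hzj
  · by_contra hjz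
    exact hm.not_gt hjz hmz

theorem le_iff_forall_le_of_reverses_subcritical {P ι : Type*} [PartialOrder P] [WellFoundedLT P]
    [WellFoundedGT P] {Q : ι → Type*} [∀ i, Preorder (Q i)] {g : ∀ i, P → Q i}
    (hg : ∀ i, Monotone (g i)) (hrev : ∀ j m : P, Subcritical j m → ∃ i, g i m < g i j)
    (x y : P) : x ≤ y ↔ ∀ i, g i x ≤ g i y := by
  refine ⟨fun hxy i => hg i hxy, fun hle => ?_⟩
  by_contra hxy
  obtain ⟨j, m, hjm, hjx, hym⟩ := exists_subcritical_of_not_le hxy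
  obtain ⟨i, hi⟩ := hrev j m hjm
  exact (hle i).not_gt (calc
    g i y ≤ g i m := hg i hym
    _ < g i j := hi
    _ ≤ g i x := hg i hjx)

section RankBelow

variable {P Q : Type*} [Fintype P] [Preorder Q] [DecidableLT Q]

def rankBelow (η : P → Q) (x : P) : ℕ := #{z | η z < η x}

theorem rankBelow_le_rankBelow {η : P → Q} {x y : P} (h : η x ≤ η y) :
    rankBelow η x ≤ rankBelow η y :=
  card_le_card fun z => by simpa using fun hz => hz.trans_le h

theorem rankBelow_lt_rankBelow {η : P → Q} {x y : P} (h : η x < η y) :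
    rankBelow η x < rankBelow η y := by
  refine card_lt_card ⟨fun z => by simpa using fun hz => hz.trans h, fun hsub => ?_⟩
  simpa using hsub (by simpa using h : x ∈ ({z | η z < η y} : Finset P))

theorem Monotone.rankBelow [Preorder P] {η : P → Q} (hη : Monotone η) :
    Monotone (rankBelow η) :=
  fun _ _ hxy => rankBelow_le_rankBelow (hη hxy)

end RankBelow

/-- **Proposition (Reading, Proposition 12).** The order dimension of a finite poset `P` is
the smallest `d` such that there exist posets `Q₁, …, Q_d` and order-preserving maps
`η_i : P → Q_i` such that every subcritical pair `(j,m)` of `P` is reversed by some `η_i`. -/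
theorem orderDim_eq_subcritical_reversing_maps_into_posets
    (P : Type*) [PartialOrder P] [Fintype P] :
    orderDim P = sInf {d : ℕ | ∃ (Q : Fin d → Type) (iQ : ∀ i, PartialOrder (Q i))
      (η : ∀ i, P → Q i),
      (∀ i, @Monotone P (Q i) _ (iQ i).toPreorder (η i)) ∧
      ∀ j m : P, Subcritical j m →
        ∃ i, @LT.lt (Q i) ((iQ i).toPreorder.toLT) (η i m) (η i j)} := by
  classical
  unfold orderDim
  congr 1
  ext d
  constructor
  · rintro ⟨f, hf⟩
    refine ⟨fun _ => ℝ, fun _ => inferInstance, fun i x => f x i,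
      fun i x y hxy => (hf x y).mp hxy i, fun j m ⟨hjm, _⟩ => ?_⟩
    simpa [hf] using hjm
  · rintro ⟨Q, iQ, η, hη, hrev⟩
    refine ⟨fun x i => (rankBelow (η i) x : ℝ),
      le_iff_forall_le_of_reverses_subcritical (fun i => ?_) (fun j m hjm => ?_)⟩
    · exact fun x y hxy => Nat.cast_le.mpr ((hη i).rankBelow hxy)
    · obtain ⟨i, hi⟩ := hrev j m hjm
      exact ⟨i, Nat.cast_lt.mpr (rankBelow_lt_rankBelow hi)⟩
end

section
/- Let 𝒜 be a central hyperplane arrangement in ℝⁿ with base region B, and let I ⊆ 𝒜 induce an acyclic sub-digraph of the basic digraph 𝒟(𝒜,B). Then the order-preserving map η_I : 𝒫(𝒜,B) → ℕ reverses every subcritical pair in F_I, i.e. η_I(M) < η_I(J) for every subcritical pair (J,M) associated to a hyperplane of I. -/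
open scoped RealInnerProductSpace

noncomputable section

variable {n : ℕ}

/-- The map η_I of Lemma 16: given an ordering `h : Fin k → 𝒜` of the hyperplanes of `I`,
the region `R` is sent to the binary number whose `i`-th digit (from the left) records
whether `h i ∈ S(R)`. -/
def etaMap (A : Set (Set (EuclideanSpace ℝ (Fin n)))) (B : Set (EuclideanSpace ℝ (Fin n)))
    {k : ℕ} (h : Fin k → Set (EuclideanSpace ℝ (Fin n)))
    (R : Set (EuclideanSpace ℝ (Fin n))) : ℕ :=
  ∑ i : Fin k,
    Set.indicator {i : Fin k | h i ∈ sepSet A B R} (fun i => 2 ^ (k - 1 - (i : ℕ))) i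

/-!
Let `J` cover `Jst` across `HJ`, so that `S(Jst) = S(J) \ {HJ}`. Subcriticality of `(J, M)` gives
`S(Jst) ⊆ S(M)` and `HJ ∉ S(M)`. Take `H' ∈ S(M) \ S(J)`. A hyperplane `H ≠ HJ` of the pencil of
`HJ ∩ H'` separating `J` from `B` would also separate `Jst` and `M`; since its normal is a linear
combination of those of `HJ` and `H'`, the signs at points of `B`, `J`, `Jst`, `M` rule this out.
Hence the point where the segment from `Jst` to `J` crosses `HJ` lies on the `B`-side of every other
hyperplane of the pencil, so `HJ` bounds the base region of the pencil: `HJ → H'` in the basic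
digraph. Therefore every hyperplane of `I` in `S(M) \ S(J)` comes after `HJ` in the ordering, and
comparing binary expansions gives `η(M) < η(J)`.
-/

section HalfSpace

variable {E : Type*} [NormedAddCommGroup E] [InnerProductSpace ℝ E]

theorem isOpenMap_inner_left [CompleteSpace E] {w : E} (hw : w ≠ 0) :
    IsOpenMap fun x : E => ⟪w, x⟫ := by
  refine (innerSL ℝ w).isOpenMap fun t => ⟨(t / ⟪w, w⟫) • w, ?_⟩
  change ⟪w, (t / ⟪w, w⟫) • w⟫ = t
  rw [real_inner_smul_right, div_mul_cancel₀ t (inner_self_ne_zero.mpr hw)]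

theorem interior_setOf_inner_nonneg [CompleteSpace E] {w : E} (hw : w ≠ 0) :
    interior {x : E | 0 ≤ ⟪w, x⟫} = {x | 0 < ⟪w, x⟫} := by
  change interior ((fun x => ⟪w, x⟫) ⁻¹' Set.Ici 0) = (fun x => ⟪w, x⟫) ⁻¹' Set.Ioi 0
  rw [← (isOpenMap_inner_left hw).preimage_interior_eq_interior_preimage (by fun_prop),
    interior_Ici]

theorem closure_setOf_inner_pos [CompleteSpace E] {w : E} (hw : w ≠ 0) :
    closure {x : E | 0 < ⟪w, x⟫} = {x | 0 ≤ ⟪w, x⟫} := by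
  change closure ((fun x => ⟪w, x⟫) ⁻¹' Set.Ioi 0) = (fun x => ⟪w, x⟫) ⁻¹' Set.Ici 0
  rw [← (isOpenMap_inner_left hw).preimage_closure_eq_closure_preimage (by fun_prop),
    closure_Ioi]

theorem setOf_inner_eq_zero_eq_orthogonal (w : E) :
    {x : E | ⟪w, x⟫ = 0} = ((ℝ ∙ w)ᗮ : Submodule ℝ E) := by
  ext x
  simp [Submodule.mem_orthogonal_singleton_iff_inner_right]

theorem mem_span_of_forall_inner_eq_zero [FiniteDimensional ℝ E] {S : Set E} {v : E}
    (h : ∀ x, (∀ u ∈ S, ⟪u, x⟫ = 0) → ⟪v, x⟫ = 0) : v ∈ Submodule.span ℝ S := by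
  rw [← (Submodule.span ℝ S).orthogonal_orthogonal, Submodule.mem_orthogonal]
  intro x hx
  rw [real_inner_comm]
  exact h x fun u hu => (Submodule.mem_orthogonal _ _).mp hx u (Submodule.subset_span hu)

theorem Submodule.span_inter_isOpen (K : Submodule ℝ E) {U : Set E} (hU : IsOpen U) {y : E}
    (hyK : y ∈ K) (hyU : y ∈ U) : Submodule.span ℝ ((K : Set E) ∩ U) = K := by
  refine le_antisymm (Submodule.span_le.mpr Set.inter_subset_left) fun u hu => ?_
  have hlim : Filter.Tendsto (fun δ : ℝ => y + δ • u) (nhdsWithin 0 {0}ᶜ) (nhds y) := by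
    have : Continuous fun δ : ℝ => y + δ • u := by fun_prop
    simpa using (this.tendsto 0).mono_left nhdsWithin_le_nhds
  obtain ⟨δ, hδU, hδ⟩ :=
    ((hlim.eventually (hU.mem_nhds hyU)).and self_mem_nhdsWithin).exists
  have hmem : y + δ • u ∈ (K : Set E) ∩ U := ⟨K.add_mem hyK (K.smul_mem δ hu), hδU⟩
  have hu_eq : u = δ⁻¹ • ((y + δ • u) - y) := by
    rw [add_sub_cancel_left, smul_smul, inv_mul_cancel₀ hδ, one_smul]
  rw [hu_eq]
  exact Submodule.smul_mem _ _ (Submodule.sub_mem _ (Submodule.subset_span hmem)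
    (Submodule.subset_span ⟨hyK, hyU⟩))

theorem exists_mem_openSegment_inner_eq_zero {u c a : E} (hc : 0 < ⟪u, c⟫) (ha : ⟪u, a⟫ < 0) :
    ∃ y ∈ openSegment ℝ c a, ⟪u, y⟫ = 0 := by
  have hd : 0 < ⟪u, c⟫ - ⟪u, a⟫ := by linarith
  refine ⟨_, ⟨-⟪u, a⟫ / (⟪u, c⟫ - ⟪u, a⟫), ⟪u, c⟫ / (⟪u, c⟫ - ⟪u, a⟫),
    div_pos (by linarith) hd, div_pos hc hd, by field_simp; ring, rfl⟩, ?_⟩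
  simp only [inner_add_right, real_inner_smul_right]
  field_simp
  ring

theorem inner_pos_of_mem_interior_closure_connectedComponentIn [CompleteSpace E]
    {Ω : Set E} {u x z : E} (hΩ : ∀ z ∈ Ω, ⟪u, z⟫ ≠ 0) (hxΩ : x ∈ Ω) (hx : 0 < ⟪u, x⟫)
    (hz : z ∈ interior (closure (connectedComponentIn Ω x))) : 0 < ⟪u, z⟫ := by
  have hu : u ≠ 0 := by rintro rfl; simp at hx
  have hcomp : connectedComponentIn Ω x ⊆ {z | 0 < ⟪u, z⟫} := by
    refine isPreconnected_connectedComponentIn.subset_left_of_subset_union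
      (v := {z | ⟪u, z⟫ < 0}) (isOpen_lt continuous_const (by fun_prop))
      (isOpen_lt (by fun_prop) continuous_const)
      (Set.disjoint_left.mpr fun z (h₁ : 0 < ⟪u, z⟫) (h₂ : ⟪u, z⟫ < 0) => by linarith)
      (fun z hz => (hΩ z (connectedComponentIn_subset Ω x hz)).lt_or_gt.symm)
      ⟨x, mem_connectedComponentIn hxΩ, hx⟩
  have := interior_mono (closure_mono hcomp) hz
  rwa [closure_setOf_inner_pos hu, interior_setOf_inner_nonneg hu] at this

theorem convex_setOf_inner_pos (w : E) : Convex ℝ {z : E | 0 < ⟪w, z⟫} :=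
  convex_halfSpace_gt (innerₛₗ ℝ w).isLinear 0

theorem notMem_span_pair_of_signs {u v w b a c m : E}
    (hub : 0 < ⟪u, b⟫) (hvb : 0 < ⟪v, b⟫) (hwb : 0 < ⟪w, b⟫)
    (hua : ⟪u, a⟫ < 0) (hva : 0 < ⟪v, a⟫) (hwa : ⟪w, a⟫ < 0)
    (huc : 0 < ⟪u, c⟫) (hvc : 0 < ⟪v, c⟫) (hwc : ⟪w, c⟫ < 0)
    (hum : 0 < ⟪u, m⟫) (hvm : ⟪v, m⟫ < 0) (hwm : ⟪w, m⟫ < 0) :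
    w ∉ Submodule.span ℝ {u, v} := by
  intro hw
  obtain ⟨s, t, rfl⟩ := Submodule.mem_span_pair.mp hw
  simp only [inner_add_left, real_inner_smul_left] at hwb hwa hwc hwm
  -- each sign pattern of `(s, t)` is refuted at one of the four points
  rcases le_or_gt 0 s with hs | hs <;> rcases le_or_gt 0 t with ht | ht
  · linarith [mul_nonneg hs huc.le, mul_nonneg ht hvc.le]
  · linarith [mul_nonneg hs hum.le, mul_pos_of_neg_of_neg ht hvm]
  · linarith [mul_pos_of_neg_of_neg hs hua, mul_nonneg ht hva.le]
  · linarith [mul_neg_of_neg_of_pos hs hub, mul_neg_of_neg_of_pos ht hvb]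

end HalfSpace

def regionOf (A : Set (Set (EuclideanSpace ℝ (Fin n)))) (x : EuclideanSpace ℝ (Fin n)) :
    Set (EuclideanSpace ℝ (Fin n)) :=
  closure (connectedComponentIn (arrComplement A) x)

section Arrangement

variable {A : Set (Set (EuclideanSpace ℝ (Fin n)))} {H : Set (EuclideanSpace ℝ (Fin n))}
  {w x : EuclideanSpace ℝ (Fin n)}

theorem inner_ne_zero_of_mem_arrComplement (hH : H ∈ A) (hw : H = {x | ⟪w, x⟫ = 0})
    (hx : x ∈ arrComplement A) : ⟪w, x⟫ ≠ 0 := fun h0 =>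
  hx (Set.mem_biUnion hH (hw ▸ h0))

namespace IsCentralArrangement

theorem isOpen_arrComplement (hA : IsCentralArrangement A) : IsOpen (arrComplement A) := by
  refine (hA.1.isClosed_biUnion fun H hH => ?_).isOpen_compl
  obtain ⟨v, -, rfl⟩ := hA.2.2 H hH
  exact isClosed_eq (by fun_prop) continuous_const

theorem self_mem_interior_regionOf (hA : IsCentralArrangement A) (hx : x ∈ arrComplement A) :
    x ∈ interior (regionOf A x) :=
  interior_maximal subset_closure hA.isOpen_arrComplement.connectedComponentIn
    (mem_connectedComponentIn hx)

theorem exists_normal_pos (hA : IsCentralArrangement A) (hH : H ∈ A)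
    (hx : x ∈ arrComplement A) : ∃ w, H = {z | ⟪w, z⟫ = 0} ∧ 0 < ⟪w, x⟫ := by
  obtain ⟨v, -, hv⟩ := hA.2.2 H hH
  rcases (inner_ne_zero_of_mem_arrComplement hH hv hx).lt_or_gt with hneg | hpos
  · refine ⟨-v, ?_, by rw [inner_neg_left]; linarith⟩
    simp [hv, inner_neg_left]
  · exact ⟨v, hv, hpos⟩

theorem mem_sepSet_regionOf_iff (hA : IsCentralArrangement A) (hH : H ∈ A)
    (hw : H = {z | ⟪w, z⟫ = 0}) {b : EuclideanSpace ℝ (Fin n)} (hb : b ∈ arrComplement A)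
    (hwb : 0 < ⟪w, b⟫) (hx : x ∈ arrComplement A) :
    H ∈ sepSet A (regionOf A b) (regionOf A x) ↔ ⟪w, x⟫ < 0 := by
  have hΩ : ∀ z ∈ arrComplement A, ⟪w, z⟫ ≠ 0 := fun z hz =>
    inner_ne_zero_of_mem_arrComplement hH hw hz
  constructor
  · rintro ⟨-, v, -, hv, hvx, hvb⟩
    have hspan : v ∈ Submodule.span ℝ {w} := mem_span_of_forall_inner_eq_zero fun z hz =>
      (hv ▸ hw ▸ hz w rfl : z ∈ {z | ⟪v, z⟫ = 0})
    obtain ⟨c, rfl⟩ := Submodule.mem_span_singleton.mp hspan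
    have h₁ := hvx x (hA.self_mem_interior_regionOf hx)
    have h₂ := hvb b (hA.self_mem_interior_regionOf hb)
    rw [real_inner_smul_left] at h₁ h₂
    nlinarith
  · intro hwx
    refine ⟨hH, -w, neg_ne_zero.mpr fun h => by simp [h] at hwb, by simp [hw, inner_neg_left],
      fun z hz => ?_, fun z hz => ?_⟩
    · exact inner_pos_of_mem_interior_closure_connectedComponentIn
        (fun z hz => by simpa [inner_neg_left] using hΩ z hz) hx
        (by simpa [inner_neg_left] using hwx) hz
    · rw [inner_neg_left, neg_lt_zero]
      exact inner_pos_of_mem_interior_closure_connectedComponentIn hΩ hb hwb hz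

end IsCentralArrangement

end Arrangement

theorem isBasicIn_of_inner_pos {A A' : Set (Set (EuclideanSpace ℝ (Fin n)))} (hfin : A'.Finite)
    (hA' : A' ⊆ A) {w : Set (EuclideanSpace ℝ (Fin n)) → EuclideanSpace ℝ (Fin n)}
    (hw : ∀ H ∈ A', H = {z | ⟪w H, z⟫ = 0}) {b y : EuclideanSpace ℝ (Fin n)}
    (hwb : ∀ H ∈ A', 0 < ⟪w H, b⟫) {H : Set (EuclideanSpace ℝ (Fin n))} (hH : H ∈ A')
    (hyH : ⟪w H, y⟫ = 0) (hy : ∀ H' ∈ A', H' ≠ H → 0 < ⟪w H', y⟫) :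
    IsBasicIn A' (regionOf A b) H := by
  have hcompl : ∀ z, (∀ H' ∈ A', 0 < ⟪w H', z⟫) → z ∈ arrComplement A' := by
    intro z hz
    simp only [arrComplement, Set.mem_compl_iff, Set.mem_iUnion, not_exists]
    exact fun H' hH' hzH' => (hz H' hH').ne' ((hw H' hH') ▸ hzH' :)
  set u := w H
  have hu : u ≠ 0 := by
    intro h
    simpa [show w H = 0 from h] using hwb H hH
  set V := ⋂ H' ∈ A' \ {H}, {z | 0 < ⟪w H', z⟫}
  have hVopen : IsOpen V := (hfin.subset Set.sdiff_subset).isOpen_biInter fun _ _ =>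
    isOpen_lt continuous_const (by fun_prop)
  -- `V ∩ {0 < u}` is a convex piece of the base region of `A'`, whose closure contains `V ∩ H`
  set Vp := V ∩ {z | 0 < ⟪u, z⟫}
  have hVp : Vp ⊆ connectedComponentIn (arrComplement A') b := by
    have hconv : Convex ℝ Vp :=
      (convex_iInter₂ fun H' _ => convex_setOf_inner_pos (w H')).inter (convex_setOf_inner_pos u)
    refine hconv.isPreconnected.subset_connectedComponentIn
      ⟨Set.mem_iInter₂.mpr fun H' hH' => hwb H' hH'.1, hwb H hH⟩ fun z hz => hcompl z ?_
    intro H' hH'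
    by_cases hne : H' = H
    · exact hne ▸ hz.2
    · exact Set.mem_iInter₂.mp hz.1 H' ⟨hH', hne⟩
  have hVH : V ∩ H ⊆ regionOf A' b := calc
    V ∩ H ⊆ V ∩ closure {z | 0 < ⟪u, z⟫} := by
      rw [closure_setOf_inner_pos hu, hw H hH]
      exact Set.inter_subset_inter_right _ fun z (hz : _ = _) => hz.ge
    _ ⊆ closure Vp := hVopen.inter_closure
    _ ⊆ regionOf A' b := closure_mono hVp
  have hHK : H = ((ℝ ∙ u)ᗮ : Submodule ℝ _) :=
    (hw H hH).trans (setOf_inner_eq_zero_eq_orthogonal u)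
  refine ⟨hH, regionOf A' b, ⟨b, hcompl b hwb, rfl⟩,
    closure_mono (connectedComponentIn_mono b
      (Set.compl_subset_compl.mpr (Set.biUnion_subset_biUnion_left hA'))),
    le_antisymm (Submodule.span_mono Set.inter_subset_left) ?_⟩
  rw [hHK] at hVH ⊢
  rw [Submodule.span_eq]
  calc (ℝ ∙ u)ᗮ = Submodule.span ℝ (((ℝ ∙ u)ᗮ : Submodule ℝ _) ∩ V) :=
      (Submodule.span_inter_isOpen _ hVopen
        (Submodule.mem_orthogonal_singleton_iff_inner_right.mpr hyH)
        (Set.mem_iInter₂.mpr fun H' hH' => hy H' hH'.1 hH'.2)).symm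
    _ ≤ Submodule.span ℝ (((ℝ ∙ u)ᗮ : Submodule ℝ _) ∩ regionOf A' b) :=
      Submodule.span_mono fun z hz => ⟨hz.1, hVH ⟨hz.2, hz.1⟩⟩

theorem basicEdge_of_mem_sepSet_diff {A : Set (Set (EuclideanSpace ℝ (Fin n)))}
    {B J M C HJ H' : Set (EuclideanSpace ℝ (Fin n))} (hA : IsCentralArrangement A)
    (hB : IsRegion A B) (hJ : IsRegion A J) (hM : IsRegion A M) (hC : IsRegion A C)
    (hHJ : HJ ∈ sepSet A B J) (hHJM : HJ ∉ sepSet A B M)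
    (hCJ : sepSet A B C = sepSet A B J \ {HJ}) (hCM : sepSet A B C ⊆ sepSet A B M)
    (hH'M : H' ∈ sepSet A B M) (hH'J : H' ∉ sepSet A B J) :
    BasicEdge A B HJ H' := by
  obtain ⟨b, hb, rfl⟩ : ∃ b ∈ arrComplement A, B = regionOf A b := hB
  obtain ⟨a, ha, rfl⟩ : ∃ a ∈ arrComplement A, J = regionOf A a := hJ
  obtain ⟨m, hm, rfl⟩ : ∃ m ∈ arrComplement A, M = regionOf A m := hM
  obtain ⟨c, hc, rfl⟩ : ∃ c ∈ arrComplement A, C = regionOf A c := hC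
  choose! w hw hwb using fun H (hH : H ∈ A) => hA.exists_normal_pos hH hb
  have hneg : ∀ H ∈ A, ∀ x ∈ arrComplement A,
      H ∈ sepSet A (regionOf A b) (regionOf A x) → ⟪w H, x⟫ < 0 := fun H hH x hx =>
    (hA.mem_sepSet_regionOf_iff hH (hw H hH) hb (hwb H hH) hx).mp
  have hpos : ∀ H ∈ A, ∀ x ∈ arrComplement A,
      H ∉ sepSet A (regionOf A b) (regionOf A x) → 0 < ⟪w H, x⟫ := fun H hH x hx hnot =>
    (inner_ne_zero_of_mem_arrComplement hH (hw H hH) hx).lt_or_gt.resolve_left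
      (mt (hA.mem_sepSet_regionOf_iff hH (hw H hH) hb (hwb H hH) hx).mpr hnot)
  have hHJA : HJ ∈ A := hHJ.1
  have hH'A : H' ∈ A := hH'M.1
  have hHJC : HJ ∉ sepSet A (regionOf A b) (regionOf A c) := by
    rw [hCJ]; exact fun h => h.2 rfl
  have hH'C : H' ∉ sepSet A (regionOf A b) (regionOf A c) := by
    rw [hCJ]; exact fun h => hH'J h.1
  have hother : ∀ H ∈ pencil A HJ H', H ≠ HJ →
      H ∉ sepSet A (regionOf A b) (regionOf A a) := by
    rintro H ⟨hHA, hHpen⟩ hne hHa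
    have hHc : H ∈ sepSet A (regionOf A b) (regionOf A c) := by rw [hCJ]; exact ⟨hHa, hne⟩
    refine notMem_span_pair_of_signs (hwb HJ hHJA) (hwb H' hH'A) (hwb H hHA)
      (hneg HJ hHJA a ha hHJ) (hpos H' hH'A a ha hH'J) (hneg H hHA a ha hHa)
      (hpos HJ hHJA c hc hHJC) (hpos H' hH'A c hc hH'C) (hneg H hHA c hc hHc)
      (hpos HJ hHJA m hm hHJM) (hneg H' hH'A m hm hH'M) (hneg H hHA m hm (hCM hHc))
      (mem_span_of_forall_inner_eq_zero fun z hz => ?_)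
    have hzH : z ∈ H := hHpen ⟨(hw HJ hHJA) ▸ hz _ (by simp), (hw H' hH'A) ▸ hz _ (by simp)⟩
    exact ((hw H hHA) ▸ hzH :)
  -- `y ∈ HJ` lies between a point of `Jst` and one of `J`, where the rest of the pencil is positive
  obtain ⟨y, hyca, hy⟩ :=
    exists_mem_openSegment_inner_eq_zero (hpos HJ hHJA c hc hHJC) (hneg HJ hHJA a ha hHJ)
  refine ⟨hHJA, hH'A, fun h => hH'J (h ▸ hHJ),
    isBasicIn_of_inner_pos (hA.1.subset fun H hH => hH.1) (fun H hH => hH.1)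
      (fun H hH => hw H hH.1) (fun H hH => hwb H hH.1) ⟨hHJA, Set.inter_subset_left⟩ hy
      fun H hH hne => ?_⟩
  have hHc : H ∉ sepSet A (regionOf A b) (regionOf A c) := by
    rw [hCJ]; exact fun h => hother H hH hne h.1
  exact (convex_setOf_inner_pos (w H)).openSegment_subset (hpos H hH.1 c hc hHc)
    (hpos H hH.1 a ha (hother H hH hne)) hyca

theorem SubcritReg.separation {A : Set (Set (EuclideanSpace ℝ (Fin n)))}
    {B J M Jst HJ : Set (EuclideanSpace ℝ (Fin n))} (hsub : SubcritReg A B J M)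
    (hcov : CoversReg A B J Jst) (hsep : sepSet A B Jst = sepSet A B J \ {HJ}) :
    HJ ∈ sepSet A B J ∧ HJ ∉ sepSet A B M ∧ sepSet A B Jst ⊆ sepSet A B M := by
  obtain ⟨-, -, hJM, hbelow, -⟩ := hsub
  obtain ⟨hJstReg, hJstJ, -⟩ := hcov
  have hJst : sepSet A B Jst ⊆ sepSet A B M := hbelow Jst hJstReg hJstJ
  have hHJ : HJ ∈ sepSet A B J := by
    by_contra hHJ
    refine hJstJ.2 fun H hH => ?_
    rw [hsep]
    exact ⟨hH, fun h => hHJ (Set.mem_singleton_iff.mp h ▸ hH)⟩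
  refine ⟨hHJ, fun hHJM => hJM fun H hH => ?_, hJst⟩
  by_cases hne : H = HJ
  · exact hne ▸ hHJM
  · exact hJst (hsep ▸ ⟨hH, hne⟩)

theorem sum_two_pow_sub_lt_of_lex {k : ℕ} {s t : Finset (Fin k)} {i₀ : Fin k}
    (hi₀t : i₀ ∈ t) (hi₀s : i₀ ∉ s) (hlt : ∀ j ∈ s, j ∉ t → i₀ < j) :
    ∑ i ∈ s, 2 ^ (k - 1 - (i : ℕ)) < ∑ i ∈ t, 2 ^ (k - 1 - (i : ℕ)) := by
  let e : Fin k ↪ ℕ := ⟨fun i => k - 1 - i, fun i j hij => by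
    have := i.2; have := j.2; exact Fin.ext (by simp only at hij; omega)⟩
  have hmap (u : Finset (Fin k)) : ∑ i ∈ u, 2 ^ (k - 1 - (i : ℕ)) = ∑ x ∈ u.map e, 2 ^ x :=
    (Finset.sum_map u e _).symm
  rw [hmap, hmap,
    Finset.geomSum_lt_geomSum_iff_toColex_lt_toColex le_rfl,
    Finset.Colex.toColex_lt_toColex_iff_exists_forall_lt]
  refine ⟨e i₀, Finset.mem_map_of_mem e hi₀t, by simpa using hi₀s, ?_⟩
  simp only [Finset.mem_map, forall_exists_index, and_imp]
  rintro _ j hjs rfl hjt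
  have hij : i₀ < j := hlt j hjs (by simpa using hjt)
  have hj : (j : ℕ) < k := j.2
  change k - 1 - (j : ℕ) < k - 1 - (i₀ : ℕ)
  omega

open Classical in
theorem etaMap_eq_sum_filter (A : Set (Set (EuclideanSpace ℝ (Fin n))))
    (B : Set (EuclideanSpace ℝ (Fin n))) {k : ℕ} (h : Fin k → Set (EuclideanSpace ℝ (Fin n)))
    (R : Set (EuclideanSpace ℝ (Fin n))) :
    etaMap A B h R = ∑ i ∈ Finset.univ.filter (fun i => h i ∈ sepSet A B R),
      2 ^ (k - 1 - (i : ℕ)) := by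
  rw [etaMap, Finset.sum_filter]
  rfl

theorem etaMap_reverses_subcritical_general {n k : ℕ}
    (A : Set (Set (EuclideanSpace ℝ (Fin n)))) (B : Set (EuclideanSpace ℝ (Fin n)))
    (hA : IsCentralArrangement A) (hB : IsRegion A B)
    (h : Fin k → Set (EuclideanSpace ℝ (Fin n)))
    (hcompat : ∀ i j : Fin k, BasicEdge A B (h i) (h j) → i < j)
    (J M Jst HJ : Set (EuclideanSpace ℝ (Fin n)))
    (hsub : SubcritReg A B J M)
    (hcov : CoversReg A B J Jst)
    (hsep : sepSet A B Jst = sepSet A B J \ {HJ})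
    (hHJ : HJ ∈ Set.range h) :
    etaMap A B h M < etaMap A B h J := by
  classical
  obtain ⟨i₀, rfl⟩ := hHJ
  obtain ⟨hJ, hM, hJstM⟩ := hsub.separation hcov hsep
  rw [etaMap_eq_sum_filter, etaMap_eq_sum_filter]
  refine sum_two_pow_sub_lt_of_lex (by simpa using hJ) (by simpa using hM) fun j hjM hjJ => ?_
  simp only [Finset.mem_filter, Finset.mem_univ, true_and] at hjM hjJ
  exact hcompat i₀ j (basicEdge_of_mem_sepSet_diff hA hB hsub.1 hsub.2.1 hcov.1 hJ hM hsep
    hJstM hjM hjJ)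

/-- **Lemma (Reading, Lemma 16).** Let `I ⊆ A` induce an acyclic sub-digraph of the basic
digraph 𝒟(𝒜,B), ordered as `H₁, …, H_k` so that edges of 𝒟(𝒜,B) within `I` go forward.
Then the order-preserving map η_I reverses every subcritical pair `(J,M)` whose associated
hyperplane lies in `I`. -/
theorem etaMap_reverses_subcritical {n k : ℕ}
    (A : Set (Set (EuclideanSpace ℝ (Fin n)))) (B : Set (EuclideanSpace ℝ (Fin n)))
    (hA : IsCentralArrangement A) (hB : IsRegion A B)
    (h : Fin k → Set (EuclideanSpace ℝ (Fin n)))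
    (hinj : Function.Injective h) (hmem : ∀ i, h i ∈ A)
    (hcompat : ∀ i j : Fin k, BasicEdge A B (h i) (h j) → i < j)
    (J M Jst HJ : Set (EuclideanSpace ℝ (Fin n)))
    (hsub : SubcritReg A B J M)
    (hcov : CoversReg A B J Jst)
    (hsep : sepSet A B Jst = sepSet A B J \ {HJ})
    (hHJ : HJ ∈ Set.range h) :
    etaMap A B h M < etaMap A B h J :=
  etaMap_reverses_subcritical_general A B hA hB h hcompat J M Jst HJ hsub hcov hsep hHJ
end
end
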